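/- arXiv:1612.02412 — 3 statements merged into one kernel-verified Lean document; each statement's English description precedes it below -/
import Mathlib

section
/- Adding a single shortcut to the circle never decreases the diameter: for every shortcut s, diam({s}) = π. Consequently diam(1) = diam(0) = π. -/
open Real MeasureTheory

/-- Arc distance between points on the unit circle, given by their polar angles:
the length of the shorter arc between them. -/
noncomputable def arcDist (p q : ℝ) : ℝ := ⨅ n : ℤ, |p - q + 2 * π * n|

/-- Euclidean length of the chord between the circle points with angles `u` and `v`. -/
noncomputable def chordLen (u v : ℝ) : ℝ := 2 * Real.sin (arcDist u v / 2)

/-- A pair of angles is a genuine shortcut (chord) if its endpoints are distinct points. -/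
def IsShortcut (s : ℝ × ℝ) : Prop := arcDist s.1 s.2 ≠ 0

/-- δ(a) = arcsin(a/2) - a/2. -/
noncomputable def sdelta (a : ℝ) : ℝ := Real.arcsin (a / 2) - a / 2

/-- Cost of a path that starts at `p`, fully traverses the listed chords in order
(travelling along the circle in between), and ends at `q`. -/
noncomputable def walkCost (q : ℝ) : ℝ → List (ℝ × ℝ) → ℝ
  | p, [] => arcDist p q
  | p, e :: L => arcDist p e.1 + chordLen e.1 e.2 + walkCost q e.2 L

/-- Shortest-path distance from `p` to `q` using the shortcuts of `S`
(each usable in either orientation, and always traversed completely). -/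
noncomputable def dS (S : Finset (ℝ × ℝ)) (p q : ℝ) : ℝ :=
  sInf {c | ∃ L : List (ℝ × ℝ), (∀ e ∈ L, e ∈ S ∨ (e.2, e.1) ∈ S) ∧ c = walkCost q p L}

/-- Diameter of the circle augmented with the shortcuts of `S`. -/
noncomputable def diamS (S : Finset (ℝ × ℝ)) : ℝ :=
  sSup {d | ∃ p q : ℝ, d = dS S p q}

/-- diam(k): the optimal diameter achievable with `k` shortcuts. -/
noncomputable def diamK (k : ℕ) : ℝ :=
  sInf {d | ∃ S : Finset (ℝ × ℝ), S.card = k ∧ (∀ s ∈ S, IsShortcut s) ∧ d = diamS S}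

/-- Distance from `p` to `q` when a single shortcut with endpoints `u`, `v` is available. -/
noncomputable def dOne (u v p q : ℝ) : ℝ :=
  min (arcDist p q)
    (min (arcDist p u + chordLen u v + arcDist v q)
      (arcDist p v + chordLen u v + arcDist u q))

/-- Two angles represent the same point of the circle. -/
def SamePoint (p q : ℝ) : Prop := arcDist p q = 0

/-- Two pairs of angles represent the same chord of the circle. -/
def SameChord (s t : ℝ × ℝ) : Prop :=
  (SamePoint s.1 t.1 ∧ SamePoint s.2 t.2) ∨ (SamePoint s.1 t.2 ∧ SamePoint s.2 t.1)

/-- `p` lies in the deep umbra of the shortcut from `u` to `u + β`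
(where `0 < β ≤ π` is the counterclockwise arc spanned by the shortcut):
`p` lies in the inner umbra, and `|p u'| + |s| ≥ d(p, v')` where `u'` is the
endpoint closer to `p` and `v'` the other one. -/
def InDeepUmbra (u β p : ℝ) : Prop :=
  (∃ t : ℝ, sdelta (chordLen u (u + β)) ≤ t ∧ t ≤ β - sdelta (chordLen u (u + β)) ∧
    arcDist p (u + t) = 0) ∧
  (arcDist p u ≤ arcDist p (u + β) →
    arcDist p (u + β) ≤ chordLen p u + chordLen u (u + β)) ∧
  (arcDist p (u + β) ≤ arcDist p u →
    arcDist p u ≤ chordLen p (u + β) + chordLen u (u + β))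

/-- `d` equals δ*_k : for `k ∈ {3,4,5}` this is `δ(a*_k)` where `a*_k + δ(a*_k) = (k-1)π/k`,
and for `k = 6` it is `δ(2) = π/2 - 1`. -/
def dstarSpec (k : ℕ) (d : ℝ) : Prop :=
  (k = 6 ∧ d = sdelta 2) ∨
    (∃ a, a ∈ Set.Icc (0 : ℝ) 2 ∧ a + sdelta a = ((k : ℝ) - 1) * π / k ∧ d = sdelta a)

/-! The distance `arcDist m` to a fixed point `m` is a potential that grows by at most the arc
length along the circle, and along a shortcut whose endpoints are equidistant from `m` it does not
change at all. Hence no path from `m` to its antipode `m + π` is shorter than `π`. Every chord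
has such a point `m`: the midpoint of either arc it cuts off. -/

lemma arcDist_eq_dist (p q : ℝ) :
    arcDist p q = dist (p : AddCircle (2 * π)) (q : AddCircle (2 * π)) := by
  rw [dist_eq_norm, ← AddCircle.coe_sub, AddCircle.norm_eq]
  refine le_antisymm ?_ (le_ciInf fun n => ?_)
  · refine (ciInf_le ⟨0, ?_⟩ (-round ((2 * π)⁻¹ * (p - q)))).trans_eq ?_
    · rintro x ⟨n, rfl⟩; exact abs_nonneg _
    · push_cast; ring_nf
  · rw [← AddCircle.norm_eq]
    have hperiodic : ((p - q + 2 * π * n : ℝ) : AddCircle (2 * π)) = ((p - q : ℝ) : AddCircle (2 * π)) := by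
      rw [AddCircle.coe_add, add_eq_left, AddCircle.coe_eq_zero_iff]
      exact ⟨n, by rw [zsmul_eq_mul]; ring⟩
    rw [← hperiodic]
    exact QuotientAddGroup.norm_mk_le_norm

lemma arcDist_comm (p q : ℝ) : arcDist p q = arcDist q p := by
  simp only [arcDist_eq_dist, dist_comm]

lemma arcDist_nonneg (p q : ℝ) : 0 ≤ arcDist p q := by
  rw [arcDist_eq_dist]; exact dist_nonneg

lemma arcDist_self (p : ℝ) : arcDist p p = 0 := by
  rw [arcDist_eq_dist, dist_self]

lemma arcDist_triangle (p q r : ℝ) : arcDist p r ≤ arcDist p q + arcDist q r := by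
  simp only [arcDist_eq_dist]; exact dist_triangle _ _ _

lemma arcDist_le_pi (p q : ℝ) : arcDist p q ≤ π := by
  rw [arcDist_eq_dist, dist_eq_norm]
  refine (AddCircle.norm_le_half_period _ (by positivity)).trans_eq ?_
  rw [abs_of_pos (by positivity)]; ring

lemma arcDist_add_pi (p : ℝ) : arcDist p (p + π) = π := by
  have h := AddCircle.norm_half_period_eq (p := 2 * π)
  rw [abs_of_pos two_pi_pos, mul_div_cancel_left₀ π two_ne_zero] at h
  rw [arcDist_comm, arcDist_eq_dist, dist_eq_norm, ← AddCircle.coe_sub, add_sub_cancel_left, h]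

lemma arcDist_midpoint (u v : ℝ) : arcDist ((u + v) / 2) u = arcDist ((u + v) / 2) v := by
  rw [arcDist_comm _ v]
  simp only [arcDist_eq_dist, dist_eq_norm, ← AddCircle.coe_sub]
  congr 2; ring

lemma chordLen_comm (u v : ℝ) : chordLen u v = chordLen v u := by
  rw [chordLen, chordLen, arcDist_comm]

lemma chordLen_nonneg (u v : ℝ) : 0 ≤ chordLen u v := by
  have := Real.sin_nonneg_of_nonneg_of_le_pi (x := arcDist u v / 2)
    (by linarith [arcDist_nonneg u v]) (by linarith [arcDist_le_pi u v, pi_pos])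
  rw [chordLen]; positivity

lemma sub_le_walkCost {f : ℝ → ℝ} (hf : ∀ x y, f y - f x ≤ arcDist x y) (q : ℝ) :
    ∀ (p : ℝ) (L : List (ℝ × ℝ)), (∀ e ∈ L, f e.2 - f e.1 ≤ chordLen e.1 e.2) →
      f q - f p ≤ walkCost q p L
  | p, [], _ => hf p q
  | p, e :: L, hL => by
    have hrest := sub_le_walkCost hf q e.2 L fun e' he' => hL e' (List.mem_cons_of_mem _ he')
    have := hf p e.1
    have := hL e List.mem_cons_self
    rw [walkCost]; linarith

lemma walkCost_nonneg (q p : ℝ) (L : List (ℝ × ℝ)) : 0 ≤ walkCost q p L := by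
  simpa using sub_le_walkCost (f := 0) (by simpa using arcDist_nonneg) q p L
    (fun e _ => by simpa using chordLen_nonneg e.1 e.2)

lemma bddBelow_walkCosts (S : Finset (ℝ × ℝ)) (p q : ℝ) :
    BddBelow {c | ∃ L : List (ℝ × ℝ), (∀ e ∈ L, e ∈ S ∨ (e.2, e.1) ∈ S) ∧ c = walkCost q p L} :=
  ⟨0, by rintro c ⟨L, -, rfl⟩; exact walkCost_nonneg q p L⟩

lemma dS_le_arcDist (S : Finset (ℝ × ℝ)) (p q : ℝ) : dS S p q ≤ arcDist p q :=
  csInf_le (bddBelow_walkCosts S p q) ⟨[], by simp, rfl⟩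

lemma sub_le_dS {S : Finset (ℝ × ℝ)} {f : ℝ → ℝ} (hf : ∀ x y, f y - f x ≤ arcDist x y)
    (hS : ∀ e ∈ S, |f e.2 - f e.1| ≤ chordLen e.1 e.2) (p q : ℝ) : f q - f p ≤ dS S p q := by
  refine le_csInf ⟨_, [], by simp, rfl⟩ ?_
  rintro c ⟨L, hL, rfl⟩
  refine sub_le_walkCost hf q p L fun e he => ?_
  rcases hL e he with h | h
  · exact (le_abs_self _).trans (hS e h)
  · rw [chordLen_comm]
    exact (le_abs_self _).trans ((abs_sub_comm _ _).trans_le (hS _ h))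

lemma dS_le_pi (S : Finset (ℝ × ℝ)) (p q : ℝ) : dS S p q ≤ π :=
  (dS_le_arcDist S p q).trans (arcDist_le_pi p q)

lemma diamS_le_pi (S : Finset (ℝ × ℝ)) : diamS S ≤ π :=
  csSup_le ⟨_, 0, 0, rfl⟩ (by rintro _ ⟨p, q, rfl⟩; exact dS_le_pi S p q)

lemma dS_le_diamS (S : Finset (ℝ × ℝ)) (p q : ℝ) : dS S p q ≤ diamS S :=
  le_csSup ⟨π, by rintro _ ⟨p, q, rfl⟩; exact dS_le_pi S p q⟩ ⟨p, q, rfl⟩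

lemma diamS_eq_pi_of_equidistant {S : Finset (ℝ × ℝ)} (m : ℝ)
    (hS : ∀ e ∈ S, arcDist m e.1 = arcDist m e.2) : diamS S = π := by
  refine le_antisymm (diamS_le_pi S) ?_
  have hf (x y : ℝ) : arcDist m y - arcDist m x ≤ arcDist x y := by
    linarith [arcDist_triangle m x y]
  have hpot := sub_le_dS (S := S) hf (fun e he => by simp [hS e he, chordLen_nonneg]) m (m + π)
  rw [arcDist_add_pi, arcDist_self, sub_zero] at hpot
  exact hpot.trans (dS_le_diamS S _ _)

lemma diamS_singleton (s : ℝ × ℝ) : diamS {s} = π :=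
  diamS_eq_pi_of_equidistant ((s.1 + s.2) / 2) fun e he => by
    rw [Finset.mem_singleton.mp he]; exact arcDist_midpoint s.1 s.2

lemma diamK_eq_pi {k : ℕ} (hex : ∃ S : Finset (ℝ × ℝ), S.card = k ∧ ∀ s ∈ S, IsShortcut s)
    (hdiam : ∀ S : Finset (ℝ × ℝ), S.card = k → diamS S = π) : diamK k = π := by
  obtain ⟨S₀, hcard₀, hshort₀⟩ := hex
  have hsub : {d | ∃ S : Finset (ℝ × ℝ), S.card = k ∧ (∀ s ∈ S, IsShortcut s) ∧ d = diamS S} ⊆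
      {π} := by
    rintro _ ⟨S, hcard, -, rfl⟩; exact hdiam S hcard
  rw [diamK, (Set.Nonempty.subset_singleton_iff ?_).mp hsub, csInf_singleton]
  exact ⟨_, S₀, hcard₀, hshort₀, rfl⟩

/-- a single shortcut never decreases the diameter, so
`diam({s}) = π` for every shortcut `s`, and `diam(1) = diam(0) = π`. -/
theorem stmt0 :
    (∀ s : ℝ × ℝ, IsShortcut s → diamS {s} = π) ∧
    diamK 1 = π ∧ diamK 0 = π := by
  have hdiameter : IsShortcut (0, π) := by
    simpa [IsShortcut] using (arcDist_add_pi 0).trans_ne pi_ne_zero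
  refine ⟨fun s _ => diamS_singleton s, diamK_eq_pi ⟨{(0, π)}, rfl, by simpa using hdiameter⟩ ?_,
    diamK_eq_pi ⟨∅, rfl, by simp⟩ ?_⟩
  · intro S hS
    obtain ⟨s, rfl⟩ := Finset.card_eq_one.mp hS
    exact diamS_singleton s
  · intro S hS
    rw [Finset.card_eq_zero.mp hS]
    exact diamS_eq_pi_of_equidistant 0 (by simp)
end

section
/- The deep umbra Û(s) of any shortcut s is non-empty and has arc length at least |s| − 4·δ(δ(|s|)) > |s| − 0.02. More precisely, the arc from u + α(δ(|s|)) to v − α(δ(|s|)) is non-empty, is contained in Û(s), and has length α(|s|) − 2α(δ(|s|)) = |s| − 4δ(δ(|s|)); moreover the function x ↦ δ(δ(x)) is increasing on [0,2] and δ(δ(2)) < 0.005. -/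
/-!
Let the shortcut span the angle `β`, so that its length is `a = 2 sin (β/2)` and
`β = α(a) = a + 2δ(a)`. A point `p` at arc distance `t` from `u` has `|pu| = 2 sin (t/2)`, which is
at least `δ(a)` as soon as `t ≥ α(δ(a))`; as also `t ≥ δ(a)`, the arc from `p` to `v` has length
`β - t ≤ a + δ(a) ≤ |pu| + a`. The same holds with `u` and `v` exchanged, so the arc from
`u + α(δ(a))` to `v - α(δ(a))` lies in the deep umbra, and its length is
`β - 2α(δ(a)) = a - 4δ(δ(a))`.

The numerical claims rest on `arcsin y ≤ (π/2) y`, which gives `δ(x) ≤ 0.29 x`, on the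
monotonicity of `arcsin y - y`, and on `sin c > c - c³/6` at `c = δ(2)/2 + 0.005`.
-/

open Real MeasureTheory

open Set

lemma arcDist_eq_abs_sub {x y : ℝ} (h : |x - y| ≤ π) : arcDist x y = |x - y| := by
  have hbdd : BddBelow (range fun n : ℤ => |x - y + 2 * π * n|) :=
    ⟨0, by rintro _ ⟨n, rfl⟩; positivity⟩
  rw [arcDist]
  refine le_antisymm (by simpa using ciInf_le hbdd 0) (le_ciInf fun n => ?_)
  rcases eq_or_ne n 0 with rfl | hn
  · simp
  have hn1 : (1 : ℝ) ≤ |(n : ℝ)| := by exact_mod_cast Int.one_le_abs hn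
  have h2π : 2 * π ≤ |2 * π * n| := by
    rw [abs_mul, abs_of_pos (by positivity)]
    nlinarith [pi_pos]
  have htri := abs_sub (x - y + 2 * π * n) (x - y)
  rw [add_sub_cancel_left] at htri
  linarith

lemma arcDist_eq_of_abs_sub_eq {x y d : ℝ} (h : |x - y| = d) (hd : d ≤ π) : arcDist x y = d :=
  h ▸ arcDist_eq_abs_sub (h ▸ hd)

lemma chordLen_eq_of_abs_sub_eq {x y d : ℝ} (h : |x - y| = d) (hd : d ≤ π) :
    chordLen x y = 2 * sin (d / 2) := by
  rw [chordLen, arcDist_eq_of_abs_sub_eq h hd]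

/-- The angle `α(a)` spanned by a chord of length `a`. -/
noncomputable def chordAngle (a : ℝ) : ℝ := 2 * arcsin (a / 2)

lemma chordAngle_eq_add_sdelta (a : ℝ) : chordAngle a = a + 2 * sdelta a := by
  rw [chordAngle, sdelta]; ring

lemma chordAngle_two_mul_sin_half {β : ℝ} (h0 : 0 ≤ β) (hπ : β ≤ π) :
    chordAngle (2 * sin (β / 2)) = β := by
  rw [chordAngle, mul_div_cancel_left₀ _ two_ne_zero,
    arcsin_sin (by linarith [pi_pos]) (by linarith)]
  ring

lemma le_two_mul_sin_half_of_chordAngle_le {y x : ℝ} (hy : y ∈ Icc (-2) 2)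
    (hyx : chordAngle y ≤ x) (hx : x ≤ π) : y ≤ 2 * sin (x / 2) := by
  rw [chordAngle] at hyx
  have hy' : y / 2 ∈ Icc (-1) 1 := ⟨by linarith [hy.1], by linarith [hy.2]⟩
  have hx' : x / 2 ∈ Icc (-(π / 2)) (π / 2) :=
    ⟨by linarith [neg_pi_div_two_le_arcsin (y / 2)], by linarith⟩
  have := (arcsin_le_iff_le_sin hy' hx').1 (by linarith)
  linarith

lemma arcsin_le_pi_div_two_mul {y : ℝ} (h0 : 0 ≤ y) (h1 : y ≤ 1) : arcsin y ≤ π / 2 * y := by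
  have h := mul_le_sin (arcsin_nonneg.2 h0) (arcsin_le_pi_div_two y)
  rw [sin_arcsin (by linarith) h1, div_mul_eq_mul_div, div_le_iff₀ pi_pos] at h
  linarith

lemma sdelta_nonneg {x : ℝ} (h0 : 0 ≤ x) (h2 : x ≤ 2) : 0 ≤ sdelta x := by
  have h : x / 2 ≤ arcsin (x / 2) := by
    rw [le_arcsin_iff_sin_le' ⟨by linarith [pi_gt_three], by linarith [pi_gt_three]⟩]
    exact sin_le (by linarith)
  rw [sdelta]; linarith

lemma sdelta_le_mul {x : ℝ} (h0 : 0 ≤ x) (h2 : x ≤ 2) : sdelta x ≤ (π / 2 - 1) / 2 * x := by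
  have := arcsin_le_pi_div_two_mul (y := x / 2) (by linarith) (by linarith)
  rw [sdelta]; linarith

lemma sdelta_mapsTo : MapsTo sdelta (Icc 0 2) (Icc 0 2) := fun x ⟨h0, h2⟩ =>
  ⟨sdelta_nonneg h0 h2, by nlinarith [sdelta_le_mul h0 h2, pi_lt_d2]⟩

lemma strictMonoOn_arcsin_sub_self : StrictMonoOn (fun y => arcsin y - y) (Icc 0 1) := by
  refine strictMonoOn_of_deriv_pos (convex_Icc 0 1) (by fun_prop) fun y hy => ?_
  rw [interior_Icc] at hy
  have hd : HasDerivAt (fun y => arcsin y - y) (1 / √(1 - y ^ 2) - 1) y :=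
    (hasDerivAt_arcsin (by linarith [hy.1]) hy.2.ne).sub (hasDerivAt_id' y)
  have hsqrt : √(1 - y ^ 2) < 1 := by
    rw [sqrt_lt' one_pos]; nlinarith [hy.1]
  have hsqrt0 : 0 < √(1 - y ^ 2) := sqrt_pos.2 (by nlinarith [hy.1, hy.2])
  rw [hd.deriv, sub_pos, one_lt_div hsqrt0]
  exact hsqrt

lemma sdelta_strictMonoOn : StrictMonoOn sdelta (Icc 0 2) := by
  have hmaps : MapsTo (· / 2 : ℝ → ℝ) (Icc 0 2) (Icc 0 1) := fun x ⟨h0, h2⟩ =>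
    ⟨by linarith, by linarith⟩
  exact strictMonoOn_arcsin_sub_self.comp
    (fun x _ y _ h => div_lt_div_of_pos_right h two_pos) hmaps

lemma sdelta_sdelta_strictMonoOn : StrictMonoOn (fun x => sdelta (sdelta x)) (Icc 0 2) :=
  sdelta_strictMonoOn.comp sdelta_strictMonoOn sdelta_mapsTo

lemma sdelta_two : sdelta 2 = π / 2 - 1 := by
  norm_num [sdelta, arcsin_one]

lemma sdelta_sdelta_two_lt : sdelta (sdelta 2) < 0.005 := by
  set c : ℝ := (π / 2 - 1) / 2 + 0.005 with hc
  have hc0 : 0 < c := by linarith [pi_gt_three]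
  have hc1 : c < 0.2925 := by linarith [pi_lt_d2]
  have hc3 : c ^ 3 < 0.2925 ^ 3 := pow_lt_pow_left₀ hc1 hc0.le (by norm_num)
  have hsin : (π / 2 - 1) / 2 < sin c := by linarith [sin_gt_sub_cube hc0]
  have h := (arcsin_lt_iff_lt_sin (x := (π / 2 - 1) / 2) (y := c)
    ⟨by linarith [pi_gt_three], by linarith [pi_lt_d2]⟩
    ⟨by linarith [pi_gt_three], by linarith [pi_gt_three]⟩).2 hsin
  rw [sdelta_two, sdelta]
  linarith

lemma four_mul_sdelta_sdelta_lt {a : ℝ} (h0 : 0 < a) (h2 : a ≤ 2) :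
    4 * sdelta (sdelta a) < a := by
  have hk : (π / 2 - 1) / 2 < 0.2875 := by linarith [pi_lt_d2]
  obtain ⟨hδ0, hδ2⟩ := sdelta_mapsTo ⟨h0.le, h2⟩
  have hδ := (sdelta_le_mul h0.le h2).trans (mul_le_mul_of_nonneg_right hk.le h0.le)
  have hδδ := (sdelta_le_mul hδ0 hδ2).trans (mul_le_mul_of_nonneg_right hk.le hδ0)
  linarith

lemma sdelta_sdelta_lt {a : ℝ} (h0 : 0 ≤ a) (h2 : a ≤ 2) : sdelta (sdelta a) < 0.005 :=
  (sdelta_sdelta_strictMonoOn.monotoneOn ⟨h0, h2⟩ ⟨zero_le_two, le_rfl⟩ h2).trans_lt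
    sdelta_sdelta_two_lt

lemma chordLen_self_add {u β : ℝ} (h0 : 0 ≤ β) (hπ : β ≤ π) :
    chordLen u (u + β) = 2 * sin (β / 2) := by
  refine chordLen_eq_of_abs_sub_eq ?_ hπ
  rw [sub_add_cancel_left, abs_neg, abs_of_nonneg h0]

lemma chordLen_self_add_mem_Icc {u β : ℝ} (h0 : 0 ≤ β) (hπ : β ≤ π) :
    chordLen u (u + β) ∈ Icc 0 2 := by
  rw [chordLen_self_add h0 hπ]
  exact ⟨by linarith [sin_nonneg_of_nonneg_of_le_pi (by linarith) (by linarith : β / 2 ≤ π)],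
    by linarith [sin_le_one (β / 2)]⟩

lemma chordAngle_chordLen_self_add {u β : ℝ} (h0 : 0 ≤ β) (hπ : β ≤ π) :
    chordAngle (chordLen u (u + β)) = β := by
  rw [chordLen_self_add h0 hπ, chordAngle_two_mul_sin_half h0 hπ]

theorem inDeepUmbra_self_add {u β t : ℝ} (h0 : 0 ≤ β) (hπ : β ≤ π)
    (ht : chordAngle (sdelta (chordLen u (u + β))) ≤ t)
    (ht' : t ≤ β - chordAngle (sdelta (chordLen u (u + β)))) :
    InDeepUmbra u β (u + t) := by
  have hβa := (chordAngle_chordLen_self_add (u := u) h0 hπ).symm.trans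
    (chordAngle_eq_add_sdelta _)
  obtain ⟨hδ0, hδ2⟩ := sdelta_mapsTo (chordLen_self_add_mem_Icc (u := u) h0 hπ)
  have hA := chordAngle_eq_add_sdelta (sdelta (chordLen u (u + β)))
  have hδδ := (sdelta_mapsTo ⟨hδ0, hδ2⟩).1
  set a := chordLen u (u + β)
  have hfar : ∀ s, chordAngle (sdelta a) ≤ s → s ≤ β → β - s ≤ 2 * sin (s / 2) + a :=
    fun s hs hsβ => by
      have := le_two_mul_sin_half_of_chordAngle_le ⟨by linarith, hδ2⟩ hs (hsβ.trans hπ)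
      linarith
  have hdu : |u + t - u| = t := by rw [add_sub_cancel_left, abs_of_nonneg (by linarith)]
  have hdv : |u + t - (u + β)| = β - t := by
    rw [add_sub_add_left_eq_sub, abs_sub_comm, abs_of_nonneg (by linarith)]
  have htπ : t ≤ π := by linarith
  have hβtπ : β - t ≤ π := by linarith
  refine ⟨⟨t, by linarith, by linarith, by simp [arcDist_eq_abs_sub, pi_pos.le]⟩,
    fun _ => ?_, fun _ => ?_⟩
  · rw [arcDist_eq_of_abs_sub_eq hdv hβtπ, chordLen_eq_of_abs_sub_eq hdu htπ]
    exact hfar t ht (by linarith)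
  · rw [arcDist_eq_of_abs_sub_eq hdu htπ, chordLen_eq_of_abs_sub_eq hdv hβtπ]
    have := hfar (β - t) (by linarith) (by linarith)
    linarith

/-- the deep umbra is almost all of the inner umbra. Let the shortcut span
the counterclockwise arc from `u` to `v = u + β` with `0 < β ≤ π`, let `a` be its chord
length and `A = α(δ(a)) = 2·arcsin(δ(a)/2)`. Then the arc from `u + A` to `v - A` is
non-empty, is contained in the deep umbra, and has length
`α(a) - 2α(δ(a)) = a - 4δ(δ(a)) > a - 0.02`; moreover `x ↦ δ(δ(x))` is increasing on
`[0,2]` and `δ(δ(2)) < 0.005`. -/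
theorem stmt12 (u β a A : ℝ) (hβ : 0 < β) (hβπ : β ≤ π)
    (ha : a = chordLen u (u + β)) (hA : A = 2 * Real.arcsin (sdelta a / 2)) :
    A < β - A ∧
    (∀ t : ℝ, A ≤ t → t ≤ β - A → InDeepUmbra u β (u + t)) ∧
    (β - A) - A = a - 4 * sdelta (sdelta a) ∧
    a - 4 * sdelta (sdelta a) > a - 0.02 ∧
    StrictMonoOn (fun x => sdelta (sdelta x)) (Set.Icc (0 : ℝ) 2) ∧
    sdelta (sdelta 2) < 0.005 := by
  have ha0 : 0 < a := by
    rw [ha, chordLen_self_add hβ.le hβπ]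
    linarith [sin_pos_of_pos_of_lt_pi (by linarith : 0 < β / 2) (by linarith : β / 2 < π)]
  have ha2 : a ≤ 2 := (ha ▸ chordLen_self_add_mem_Icc hβ.le hβπ).2
  have hβa : β = a + 2 * sdelta a := by
    rw [← chordAngle_eq_add_sdelta, ha, chordAngle_chordLen_self_add hβ.le hβπ]
  have hA' : A = sdelta a + 2 * sdelta (sdelta a) := hA.trans (chordAngle_eq_add_sdelta _)
  have hlen : (β - A) - A = a - 4 * sdelta (sdelta a) := by rw [hβa, hA']; ring
  refine ⟨by linarith [four_mul_sdelta_sdelta_lt ha0 ha2], fun t ht ht' => ?_, hlen,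
    by linarith [sdelta_sdelta_lt ha0.le ha2], sdelta_sdelta_strictMonoOn, sdelta_sdelta_two_lt⟩
  subst ha hA
  exact inDeepUmbra_self_add hβ.le hβπ ht ht'
end

section
/- The function g(x) := (1.2 − x)/√(1 − x²) + 2x − 1.2 − arcsin(x) satisfies g(x) > 0 for all x ∈ (0,1). -/
open Real MeasureTheory

set_option maxHeartbeats 1000000 in
lemma stmt16_aux (x s r : ℝ) (hc : 0.45 < x) (hx1 : x < 1)
    (hs2 : s ^ 2 = 1 - x ^ 2) (hspos : 0 < s)
    (hr2 : r ^ 2 = 2 * (1 - x)) (hrpos : 0 < r) :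
    2.7708 - 2 * x - r < (1.2 - x) / s := by
  rcases le_or_gt x 0.65 with hm | hm
  · have hrle : r ≤ 1.049 := by nlinarith
    have hcbar : 0 < 2.7708 - 2 * x - r := by nlinarith
    have hL2 : (1.526 - 1.0607 * x) ^ 2 ≤ 2 * (1 - x) := by
      nlinarith [mul_nonneg (sub_nonneg.2 hc.le) (sub_nonneg.2 hm)]
    have hL : 1.526 - 1.0607 * x ≤ r := by nlinarith
    have hk : (0:ℝ) < 2 * (2.7708 - 2*x) * (1 - x^2) := by nlinarith
    have hkL := mul_le_mul_of_nonneg_left hL hk.le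
    have hpoly : 0 < 2 * (2.7708 - 2*x) * (1 - x^2) * (1.526 - 1.0607 * x)
        - (((2.7708 - 2*x)^2 + 2*(1-x)) * (1 - x^2) - (1.2 - x)^2) := by
      nlinarith [mul_nonneg (sub_nonneg.2 hc.le) (sub_nonneg.2 hm),
        sq_nonneg ((x-0.45)*(0.65-x)),
        mul_nonneg (mul_nonneg (sub_nonneg.2 hc.le) (sub_nonneg.2 hm)) (by linarith : (0:ℝ) ≤ x)]
    have hz : (r ^ 2 - 2 * (1 - x)) * (1 - x ^ 2) = 0 := by rw [hr2]; ring
    have hid : (1.2 - x) ^ 2 - (2.7708 - 2 * x - r) ^ 2 * (1 - x ^ 2)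
        = 2 * (2.7708 - 2 * x) * (1 - x ^ 2) * r
          - (((2.7708 - 2 * x) ^ 2 + 2 * (1 - x)) * (1 - x ^ 2) - (1.2 - x) ^ 2)
          - (r ^ 2 - 2 * (1 - x)) * (1 - x ^ 2) := by ring
    have hG : (2.7708 - 2 * x - r) ^ 2 * s ^ 2 < (1.2 - x) ^ 2 := by
      rw [hs2]; linarith
    have hcs := mul_pos hcbar hspos
    have h12 : 0 < 1.2 - x := by linarith
    rw [lt_div_iff₀ hspos]; nlinarith [hG, hcs, h12]
  · have hsr : s ≤ r := by nlinarith
    have h32 : 0 < 3.2 - 3 * x := by nlinarith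
    have hc2 : 0 < 2.7708 - 2 * x := by nlinarith
    have hQ2 : ((2.7708 - 2 * x) * r) ^ 2 < (3.2 - 3 * x) ^ 2 := by
      rw [mul_pow, hr2]
      nlinarith [sq_nonneg (x - 1), mul_nonneg (sub_nonneg.2 hm.le) (sub_nonneg.2 hx1.le)]
    have hq2 : (2.7708 - 2 * x) * r < 3.2 - 3 * x := by
      nlinarith [mul_pos hc2 hrpos, hQ2, h32]
    have h1 : (1.2 - x) / r ≤ (1.2 - x) / s :=
      div_le_div_of_nonneg_left (by nlinarith) hspos hsr
    have h2 : 2.7708 - 2 * x - r < (1.2 - x) / r := by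
      rw [lt_div_iff₀ hrpos]; nlinarith
    linarith


set_option maxHeartbeats 1000000 in
/-- `g(x) = (1.2 - x)/√(1-x²) + 2x - 1.2 - arcsin x > 0` on `(0,1)`. -/
theorem stmt16 : ∀ x ∈ Set.Ioo (0 : ℝ) 1,
    0 < (1.2 - x) / Real.sqrt (1 - x ^ 2) + 2 * x - 1.2 - Real.arcsin x := by
  rintro x ⟨hx0, hx1⟩
  have hx2 : x ^ 2 < 1 := by nlinarith
  have hs2 : Real.sqrt (1 - x ^ 2) ^ 2 = 1 - x ^ 2 := Real.sq_sqrt (by nlinarith)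
  have hspos : 0 < Real.sqrt (1 - x ^ 2) := Real.sqrt_pos.2 (by nlinarith)
  rcases le_or_gt x 0.45 with hc | hc
  · have htan : Real.arcsin x < Real.tan (Real.arcsin x) :=
      Real.lt_tan (Real.arcsin_pos.2 hx0) (Real.arcsin_lt_pi_div_two.2 hx1)
    rw [Real.tan_arcsin] at htan
    have hsle : Real.sqrt (1 - x ^ 2) ≤ 1 := by nlinarith
    have h2 : 1.2 - 2 * x ≤ (1.2 - 2 * x) / Real.sqrt (1 - x ^ 2) := by
      rw [le_div_iff₀ hspos]; nlinarith
    have h3 : (1.2 - x) / Real.sqrt (1 - x ^ 2) - x / Real.sqrt (1 - x ^ 2)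
        = (1.2 - 2 * x) / Real.sqrt (1 - x ^ 2) := by ring
    linarith
  · have hr2 : Real.sqrt (2 * (1 - x)) ^ 2 = 2 * (1 - x) := Real.sq_sqrt (by nlinarith)
    have hrpos : 0 < Real.sqrt (2 * (1 - x)) := Real.sqrt_pos.2 (by nlinarith)
    have hub : 1 - Real.arccos x ^ 2 / 2 ≤ x := by
      have h := Real.one_sub_sq_div_two_le_cos (x := Real.arccos x)
      rwa [Real.cos_arccos (by linarith) hx1.le] at h
    have hu0 : 0 ≤ Real.arccos x := Real.arccos_nonneg x
    have hru : Real.sqrt (2 * (1 - x)) ≤ Real.arccos x := by nlinarith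
    have harc : Real.arcsin x ≤ π / 2 - Real.sqrt (2 * (1 - x)) := by
      rw [Real.arcsin_eq_pi_div_two_sub_arccos]; linarith
    have hpi : π < 3.1416 := by linarith [Real.pi_lt_d6]
    have key := stmt16_aux x (Real.sqrt (1 - x ^ 2)) (Real.sqrt (2 * (1 - x)))
      hc hx1 hs2 hspos hr2 hrpos
    linarith
end
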